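/- Merging common prefixes of the token cycles in the detokenizing FST into a trie does not change the transduction relation: the compact (trie-based) detokenizing FST computes the same function D : V* → Σ* as the original FST with disjoint cycles. -/

import Mathlib

/-- A finite-state transducer: initial state, final states, and edges with
optional input and output labels (`none` meaning ε). -/
structure FST (α β Q : Type) where
  init : Q
  final : Set Q
  E : Set (Q × Option α × Option β × Q)

namespace FST

variable {α β Q : Type}

/-- `Path T q x w q'` : there is a path of consecutive edges from `q` to `q'`
whose input labels (ignoring ε) concatenate to `x` and output labels to `w`. -/
inductive Path (T : FST α β Q) : Q → List α → List β → Q → Prop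
  | nil (q : Q) : Path T q [] [] q
  | cons {q q' q'' : Q} {i : Option α} {o : Option β} {x : List α} {w : List β} :
      (q, i, o, q') ∈ T.E → Path T q' x w q'' →
      Path T q (i.toList ++ x) (o.toList ++ w) q''

/-- The relation computed by an FST: accepting paths from the initial state. -/
def Relates (T : FST α β Q) (x : List α) (w : List β) : Prop :=
  ∃ qf ∈ T.final, T.Path T.init x w qf

/-- `IsPathList T q es q'` : `es` is a list of consecutive edges of `T` from `q` to `q'`. -/
def IsPathList (T : FST α β Q) : Q → List (Q × Option α × Option β × Q) → Q → Prop
  | q, [], q' => q = q'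
  | q, e :: es, q' => e ∈ T.E ∧ e.1 = q ∧ IsPathList T e.2.2.2 es q'

end FST

section Detok

variable {σ V : Type}

/-- Detokenization map: concatenate the string associated to each token. -/
def detok (d : V → List σ) (x : List V) : List σ :=
  (x.map d).flatten

/-- Source state of the `i`-th edge of the cycle for token `v`
(`none` is the root state `q_r`). -/
def detokSrc (v : V) (i : ℕ) : Option (V × ℕ) :=
  if i = 0 then none else some (v, i)

/-- Target state of the `i`-th edge of the cycle for token `v`. -/
def detokTgt (d : V → List σ) (v : V) (i : ℕ) : Option (V × ℕ) :=
  if i + 1 = (d v).length then none else some (v, i + 1)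

/-- Input label of the `i`-th edge of the cycle for token `v`:
the last edge consumes `v`, all others consume ε. -/
def detokInp (d : V → List σ) (v : V) (i : ℕ) : Option V :=
  if i + 1 = (d v).length then some v else none

/-- Edges of the detokenizing FST `T_V` (Algorithm 1): one cycle per token `v`
from the root back to the root, outputting the characters of `d v` in order. -/
def detokE (d : V → List σ) : Set (Option (V × ℕ) × Option V × Option σ × Option (V × ℕ)) :=
  { e | ∃ (v : V) (i : ℕ) (h : i < (d v).length),
      e = (detokSrc v i, detokInp d v i, some ((d v).get ⟨i, h⟩), detokTgt d v i) }

/-- The detokenizing FST `T_V`: root state `none` is both initial and final. -/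
def detokFST (d : V → List σ) : FST V σ (Option (V × ℕ)) :=
  ⟨none, {none}, detokE d⟩

end Detok

section Compact

variable {σ V : Type}

/-- Edges of the compact (trie-based) detokenizing FST.  States are the proper
prefixes of the detokenizations `d v`, with the root being `[]`: non-final edges
extend a shared proper prefix by one output character, and final edges consume
the whole token `v`, output its last character, and return to the root. -/
def compactE (d : V → List σ) : Set (List σ × Option V × Option σ × List σ) :=
  { e | (∃ (p : List σ) (c : σ), e = (p, none, some c, p ++ [c]) ∧
          ∃ v : V, (p ++ [c]) <+: d v ∧ p ++ [c] ≠ d v) ∨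
        ∃ (p : List σ) (c : σ) (v : V), e = (p, some v, some c, []) ∧ p ++ [c] = d v }

/-- The compact trie-based detokenizing FST. -/
def compactFST (d : V → List σ) : FST V σ (List σ) :=
  ⟨[], {[]}, compactE d⟩

end Compact


/-! The cycle FST accepts every pair `(x, detok d x)`: each token is read by walking its cycle
once. Sending the `i`-th state on the cycle of `v` to the prefix `(d v).take i` maps the edges of
the cycle FST to edges of the trie with the same labels, so the trie accepts at least as much.
Conversely, a state of the trie is always the part of the current token's string output so far,
so every accepting path of the trie outputs the detokenization of its input. -/

namespace FST

variable {α β Q Q' : Type}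

theorem Path.append {T : FST α β Q} {q q' q'' : Q} {x x' : List α} {w w' : List β}
    (h : T.Path q x w q') (h' : T.Path q' x' w' q'') :
    T.Path q (x ++ x') (w ++ w') q'' := by
  induction h with
  | nil => exact h'
  | cons he _ ih => simpa only [List.append_assoc] using Path.cons he (ih h')

theorem Path.map {T : FST α β Q} {T' : FST α β Q'} (f : Q → Q')
    (hf : ∀ q i o q', (q, i, o, q') ∈ T.E → (f q, i, o, f q') ∈ T'.E)
    {q q' : Q} {x : List α} {w : List β} (h : T.Path q x w q') :
    T'.Path (f q) x w (f q') := by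
  induction h with
  | nil q => exact Path.nil (f q)
  | cons he _ ih => exact Path.cons (hf _ _ _ _ he) ih

theorem Relates.map {T : FST α β Q} {T' : FST α β Q'} (f : Q → Q')
    (hf : ∀ q i o q', (q, i, o, q') ∈ T.E → (f q, i, o, f q') ∈ T'.E)
    (hinit : f T.init = T'.init) (hfinal : ∀ q ∈ T.final, f q ∈ T'.final)
    {x : List α} {w : List β} (h : T.Relates x w) : T'.Relates x w := by
  obtain ⟨qf, hqf, hp⟩ := h
  exact ⟨f qf, hfinal qf hqf, hinit ▸ hp.map f hf⟩

end FST

section Detokenization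

variable {σ V : Type} (d : V → List σ)

theorem detok_cons (v : V) (x : List V) : detok d (v :: x) = d v ++ detok d x := rfl

theorem detokFST_edge_mem {v : V} {i : ℕ} (hi : i < (d v).length) :
    (detokSrc v i, detokInp d v i, some (d v)[i], detokTgt d v i) ∈ (detokFST d).E :=
  ⟨v, i, hi, rfl⟩

theorem detokFST_path_cycle (v : V) (k i : ℕ) (hik : i + k + 1 = (d v).length) :
    (detokFST d).Path (detokSrc v i) [v] ((d v).drop i) none := by
  induction k generalizing i with
  | zero =>
    have hlast : i + 1 = (d v).length := hik
    have hedge := detokFST_edge_mem d (i := i) (v := v) (by omega)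
    rw [detokInp, detokTgt, if_pos hlast, if_pos hlast] at hedge
    rw [List.drop_eq_getElem_cons (by omega), List.drop_of_length_le (by omega)]
    exact FST.Path.cons hedge (FST.Path.nil none)
  | succ k ih =>
    have hedge := detokFST_edge_mem d (i := i) (v := v) (by omega)
    rw [detokInp, detokTgt, if_neg (by omega), if_neg (by omega)] at hedge
    have hrest := ih (i + 1) (by omega)
    rw [detokSrc, if_neg (by omega)] at hrest
    rw [List.drop_eq_getElem_cons (by omega)]
    exact FST.Path.cons hedge hrest

theorem detokFST_relates_detok (hd : ∀ v, d v ≠ []) (x : List V) :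
    (detokFST d).Relates x (detok d x) := by
  refine ⟨none, rfl, ?_⟩
  induction x with
  | nil => exact FST.Path.nil none
  | cons v x ih =>
    have hcycle := detokFST_path_cycle d v ((d v).length - 1) 0
      (by have := List.length_pos_iff.mpr (hd v); omega)
    exact hcycle.append ih

theorem compactFST_path_append_eq_detok {p : List σ} {x : List V} {w : List σ}
    (h : (compactFST d).Path p x w []) : p ++ w = detok d x := by
  generalize hroot : ([] : List σ) = r at h
  induction h with
  | nil => subst hroot; rfl
  | cons he _ ih =>
    rcases he with ⟨p, c, heq, -⟩ | ⟨p, c, v, heq, hdv⟩ <;> cases heq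
    · simpa using ih hroot
    · have hw := ih hroot
      simp only [List.nil_append] at hw
      simp [hw, detok_cons, ← hdv]

def detokPrefix : Option (V × ℕ) → List σ
  | none => []
  | some (v, i) => (d v).take i

theorem detokPrefix_detokSrc (v : V) (i : ℕ) : detokPrefix d (detokSrc v i) = (d v).take i := by
  unfold detokSrc
  split_ifs with hi
  · simp [detokPrefix, hi]
  · rfl

theorem detokPrefix_mem_compactE :
    ∀ q i o q', (q, i, o, q') ∈ (detokFST d).E →
      (detokPrefix d q, i, o, detokPrefix d q') ∈ (compactFST d).E := by
  rintro _ _ _ _ ⟨v, i, hi, heq⟩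
  cases heq
  have hsnoc : (d v).take i ++ [(d v)[i]] = (d v).take (i + 1) := List.take_append_getElem hi
  rw [detokPrefix_detokSrc, detokInp, detokTgt, List.get_eq_getElem]
  split_ifs with hlast
  · refine Or.inr ⟨_, _, v, rfl, ?_⟩
    rw [hsnoc, List.take_of_length_le hlast.ge]
  · rw [detokPrefix, ← hsnoc]
    refine Or.inl ⟨_, _, rfl, v, hsnoc ▸ List.take_prefix _ _, fun h => hlast ?_⟩
    have := congrArg List.length h
    simp only [hsnoc, List.length_take] at this
    omega

end Detokenization

theorem compactFST_eq_detokFST_general {σ V : Type}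
    (d : V → List σ) (hd : ∀ v, d v ≠ []) :
    ∀ (x : List V) (w : List σ),
      ((compactFST d).Relates x w ↔ (detokFST d).Relates x w) ∧
        ((compactFST d).Relates x w ↔ w = detok d x) := by
  intro x w
  have compact_sound : (compactFST d).Relates x w → w = detok d x := by
    rintro ⟨qf, rfl, hp⟩
    exact compactFST_path_append_eq_detok d hp
  have detok_complete : w = detok d x → (detokFST d).Relates x w := by
    rintro rfl
    exact detokFST_relates_detok d hd x
  have detok_to_compact : (detokFST d).Relates x w → (compactFST d).Relates x w :=
    FST.Relates.map (detokPrefix d) (detokPrefix_mem_compactE d) rfl (by rintro _ rfl; rfl)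
  exact ⟨⟨detok_complete ∘ compact_sound, detok_to_compact⟩,
    ⟨compact_sound, detok_to_compact ∘ detok_complete⟩⟩

/-- Merging common prefixes of the token cycles of the
detokenizing FST into a trie does not change the transduction relation: the
compact FST computes the same function `D : V* → Σ*` as the original FST. -/
theorem compactFST_eq_detokFST {σ V : Type} [Fintype V]
    (d : V → List σ) (hd : ∀ v, d v ≠ []) :
    ∀ (x : List V) (w : List σ),
      ((compactFST d).Relates x w ↔ (detokFST d).Relates x w) ∧
        ((compactFST d).Relates x w ↔ w = detok d x) :=
  compactFST_eq_detokFST_general d hd
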